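/- Let R be a commutative ring, and I ⊂ R an ideal generated by elements s₁, …, s_m. If an R-module C is s_j-contraadjusted (Ext¹_R(R[s_j⁻¹], C) = 0) for each j, then C is I-adically complete: the canonical map C → lim_{n≥1} C/IⁿC is surjective. -/

import Mathlib

/-!
For `s ∈ R`, the free resolution `0 → R[X] --(1 - sX)--> R[X] → R[s⁻¹] → 0` computes
`Ext¹_R(R[s⁻¹], C)`; its vanishing says that every linear map `R[X] → C` extends along
multiplication by `1 - sX`, i.e. on the basis `Xⁿ`: every system `bₙ - s bₙ₊₁ = cₙ` has a
solution in `C`. Then `b₀ = ∑_{n<N} sⁿ cₙ + s^N b_N`, so `b₀` is an `s`-adic sum of the series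
`∑ sⁿ cₙ`: `C` is `(s)`-adically precomplete.

Precompleteness passes from `(t)` and `J` to `(t) + J`: a term of `((t) + J)ⁿ C` splits as
`∑_{k ≤ n} tᵏ gₖ` with `gₖ ∈ J^{n-k} C` (binomial theorem for ideals); one sums each column
`J`-adically and then the resulting series in `t`. Induction on the generators finishes.
-/

noncomputable section

namespace CategoryTheory.ShortComplex

open Limits ZeroObject

variable {C : Type*} [Category* C] [Abelian C] (S : ShortComplex C)

def twoTermComplexX : ℕ → C
  | 0 => S.X₂
  | 1 => S.X₁
  | _ + 2 => 0

def twoTermComplexD : ∀ n : ℕ, S.twoTermComplexX (n + 1) ⟶ S.twoTermComplexX n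
  | 0 => S.f
  | _ + 1 => 0

/-- The complex `⋯ → 0 → S.X₁ → S.X₂`, with `S.X₂` in degree `0`. -/
def twoTermComplex : ChainComplex C ℕ :=
  ChainComplex.of S.twoTermComplexX S.twoTermComplexD fun n => by
    cases n <;> exact zero_comp

lemma twoTermComplex_d_one_zero : S.twoTermComplex.d 1 0 = S.f :=
  ChainComplex.of_d S.twoTermComplexX S.twoTermComplexD 0

lemma twoTermComplex_d_two_one : S.twoTermComplex.d 2 1 = 0 :=
  ChainComplex.of_d S.twoTermComplexX S.twoTermComplexD 1

lemma isZero_twoTermComplex_X (n : ℕ) : IsZero (S.twoTermComplex.X (n + 2)) :=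
  isZero_zero C

variable {S}

lemma ShortExact.twoTermComplex_exactAt_succ (hS : S.ShortExact) (n : ℕ) :
    S.twoTermComplex.ExactAt (n + 1) := by
  rcases n with _ | n
  · rw [HomologicalComplex.exactAt_iff' _ 2 1 0 (by simp) (by simp),
      ShortComplex.exact_iff_mono _ S.twoTermComplex_d_two_one]
    change Mono (S.twoTermComplex.d 1 0)
    rw [twoTermComplex_d_one_zero]
    exact hS.mono_f
  · rw [HomologicalComplex.exactAt_iff]
    exact ShortComplex.exact_of_isZero_X₂ _ (S.isZero_twoTermComplex_X n)

def ShortExact.projectiveResolution (hS : S.ShortExact) [Projective S.X₁] [Projective S.X₂] :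
    ProjectiveResolution S.X₃ where
  complex := S.twoTermComplex
  projective
    | 0 => ‹Projective S.X₂›
    | 1 => ‹Projective S.X₁›
    | _ + 2 => Projective.zero_projective
  π := (ChainComplex.toSingle₀Equiv _ _).symm
    ⟨S.g, by rw [twoTermComplex_d_one_zero]; exact S.zero⟩
  quasiIso := ⟨fun n => by
    rcases n with _ | n
    · rw [ChainComplex.quasiIsoAt₀_iff, ShortComplex.quasiIso_iff_of_zeros']
      · refine (ShortComplex.exact_and_epi_g_iff_of_iso ?_).2 ⟨hS.exact, hS.epi_g⟩
        refine ShortComplex.isoMk (Iso.refl _) (Iso.refl _) (Iso.refl _) ?_ ?_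
        · dsimp
          erw [Category.id_comp, Category.comp_id]
          exact S.twoTermComplex_d_one_zero.symm
        · dsimp
          erw [Category.id_comp, Category.comp_id]
          exact (ChainComplex.toSingle₀Equiv_symm_apply_f_zero (C := S.twoTermComplex) S.g _).symm
      all_goals rfl
    · rw [quasiIsoAt_iff_exactAt' _ _ (ChainComplex.exactAt_succ_single_obj _ _)]
      exact hS.twoTermComplex_exactAt_succ n⟩

theorem ShortExact.exists_f_comp_eq_of_subsingleton_ext_one {R : Type*} [Ring R] [Linear R C]
    [EnoughProjectives C] (hS : S.ShortExact) [Projective S.X₁] [Projective S.X₂] {Y : C}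
    (hY : Subsingleton (((Ext R C 1).obj (Opposite.op S.X₃)).obj Y)) (φ : S.X₁ ⟶ Y) :
    ∃ ψ : S.X₂ ⟶ Y, S.f ≫ ψ = φ := by
  have hexact : (hS.projectiveResolution.complex.linearYonedaObj R Y).ExactAt 1 := by
    rw [HomologicalComplex.exactAt_iff_isZero_homology]
    exact (@ModuleCat.isZero_of_subsingleton _ _ _ hY).of_iso
      (hS.projectiveResolution.isoExt 1 Y).symm
  rw [HomologicalComplex.exactAt_iff' _ 0 1 2 (by simp) (by simp),
    ShortComplex.moduleCat_exact_iff] at hexact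
  obtain ⟨ψ, hψ⟩ := hexact φ ((S.isZero_twoTermComplex_X 0).eq_of_src _ _)
  refine ⟨ψ, ?_⟩
  simp only [ShortExact.projectiveResolution, HomologicalComplex.shortComplexFunctor'_obj_f,
    ChainComplex.linearYonedaObj_d, twoTermComplex_d_one_zero] at hψ
  exact hψ

end CategoryTheory.ShortComplex

section Telescope

open CategoryTheory Polynomial

universe u

variable {R : Type u} [CommRing R] (s : R)

theorem Polynomial.one_sub_C_mul_X_mem_nonZeroDivisors : 1 - C s * X ∈ nonZeroDivisors R[X] := by
  nontriviality R
  have h0 : (1 - C s * X).coeff 0 ≠ 0 := by simp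
  apply mem_nonZeroDivisors_of_trailingCoeff
  rw [trailingCoeff_eq_coeff_zero h0]
  simp

/-- `0 → R[X] --(1 - sX)--> R[X] → R[s⁻¹] → 0`, through `R[s⁻¹] ≃ R[X] ⧸ (sX - 1)`. -/
abbrev Localization.awayShortComplex : ShortComplex (ModuleCat.{u} R) :=
  ModuleCat.shortComplexOfCompEqZero (LinearMap.mulLeft R (1 - C s * X))
    ((Localization.awayEquivAdjoin s).symm.toAlgHom.comp
      (AdjoinRoot.mkₐ (C s * X - 1))).toLinearMap
    (by ext p; simp)

theorem Localization.awayShortComplex_shortExact :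
    (Localization.awayShortComplex s).ShortExact := by
  apply ModuleCat.shortComplex_shortExact
  · intro (p : R[X])
    change (awayEquivAdjoin s).symm (AdjoinRoot.mk _ p) = 0 ↔ ∃ q, (1 - C s * X) * q = p
    rw [map_eq_zero_iff _ (awayEquivAdjoin s).symm.injective, AdjoinRoot.mk_eq_zero, ← neg_sub,
      neg_dvd, dvd_def]
    exact exists_congr fun q => eq_comm
  · refine (injective_iff_map_eq_zero _).mpr fun p hp => ?_
    exact (mul_left_mem_nonZeroDivisors_eq_zero_iff (one_sub_C_mul_X_mem_nonZeroDivisors s)).mp hp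
  · exact (Localization.awayEquivAdjoin s).symm.surjective.comp AdjoinRoot.mk_surjective

theorem surjective_sub_smul_succ_of_subsingleton_ext_away {M : Type u} [AddCommGroup M]
    [Module R M] (hM : Subsingleton (((Ext R (ModuleCat.{u} R) 1).obj
      (Opposite.op (ModuleCat.of R (Localization.Away s)))).obj (ModuleCat.of R M))) :
    Function.Surjective fun b : ℕ → M => fun n => b n - s • b (n + 1) := by
  intro c
  obtain ⟨ψ, hψ⟩ :=
    (Localization.awayShortComplex_shortExact s).exists_f_comp_eq_of_subsingleton_ext_one hM
      (ModuleCat.ofHom (Polynomial.lsum fun n => LinearMap.toSpanSingleton R M (c n)))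
  refine ⟨fun n => ψ (X ^ n), funext fun n => ?_⟩
  have key : ψ ((1 - C s * X) * X ^ n) = c n := by
    simpa [X_pow_eq_monomial] using congr(($hψ).hom (X ^ n : R[X]))
  rwa [sub_mul, one_mul, mul_assoc, ← pow_succ', C_mul', map_sub, map_smul] at key

end Telescope

section AdicSeries

open Finset Pointwise

variable {R : Type*} [CommRing R] {M : Type*} [AddCommGroup M] [Module R M]

theorem isPrecomplete_iff_exists_sum {I : Ideal R} :
    IsPrecomplete I M ↔ ∀ f : ℕ → M, (∀ n, f n ∈ I ^ n • (⊤ : Submodule R M)) →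
      ∃ L : M, ∀ N, ∑ n ∈ range N, f n ≡ L [SMOD I ^ N • (⊤ : Submodule R M)] := by
  constructor
  · intro hI f hf
    refine hI.prec fun {m n} hmn => ?_
    rw [SModEq.sub_mem, ← neg_sub, ← sum_Ico_eq_sub _ hmn]
    refine Submodule.neg_mem _ (Submodule.sum_mem _ fun k hk => ?_)
    exact Submodule.smul_mono_left (Ideal.pow_le_pow_right (mem_Ico.mp hk).1) (hf k)
  · refine fun h => ⟨fun x hx => ?_⟩
    obtain ⟨L, hL⟩ := h (fun n => x (n + 1) - x n)
      fun n => SModEq.sub_mem.mp (hx n.le_succ).symm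
    refine ⟨x 0 + L, fun N => ?_⟩
    have := (SModEq.refl (x 0)).add (hL N)
    rwa [sum_range_sub, add_sub_cancel] at this

theorem isPrecomplete_span_singleton_of_surjective_sub_smul_succ {s : R}
    (hs : Function.Surjective fun b : ℕ → M => fun n => b n - s • b (n + 1)) :
    IsPrecomplete (Ideal.span {s}) M := by
  rw [isPrecomplete_iff_exists_sum]
  intro f hf
  simp only [Ideal.span_singleton_pow, Submodule.ideal_span_singleton_smul,
    Submodule.mem_smul_pointwise_iff_exists, Submodule.mem_top, true_and] at hf
  choose c hc using hf
  obtain ⟨b, hb⟩ := hs c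
  refine ⟨b 0, fun N => ?_⟩
  have htel : ∑ n ∈ range N, f n =
      ∑ n ∈ range N, (s ^ n • b n - s ^ (n + 1) • b (n + 1)) := by
    refine sum_congr rfl fun n _ => ?_
    rw [← hc, ← congr_fun hb n, smul_sub, smul_smul, ← pow_succ]
  rw [htel, sum_range_sub', pow_zero, one_smul, SModEq.sub_mem, sub_sub_cancel_left,
    Ideal.span_singleton_pow, Submodule.ideal_span_singleton_smul]
  exact Submodule.neg_mem _ (Submodule.smul_mem_pointwise_smul _ _ _ Submodule.mem_top)

theorem Ideal.sup_pow_le_iSup_pow_mul_pow (I J : Ideal R) (n : ℕ) :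
    (I ⊔ J) ^ n ≤ ⨆ k ∈ range (n + 1), I ^ k * J ^ (n - k) := by
  rw [← Submodule.add_eq_sup, add_pow]
  refine Finset.sum_induction _ (· ≤ _) (fun _ _ => sup_le) bot_le fun k hk => ?_
  exact Ideal.mul_le_left.trans (le_iSup₂ (f := fun k _ => I ^ k * J ^ (n - k)) k hk)

theorem exists_sum_pow_smul_of_mem_span_singleton_sup_pow_smul_top {t : R} {J : Ideal R} {n : ℕ}
    {x : M} (hx : x ∈ (Ideal.span {t} ⊔ J) ^ n • (⊤ : Submodule R M)) :
    ∃ g : ℕ → M, (∀ k, g k ∈ J ^ (n - k) • (⊤ : Submodule R M)) ∧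
      x = ∑ k ∈ range (n + 1), t ^ k • g k := by
  replace hx := Submodule.smul_mono_left (Ideal.sup_pow_le_iSup_pow_mul_pow _ _ n) hx
  simp only [Submodule.iSup_smul, Ideal.span_singleton_pow, Submodule.mul_smul,
    Submodule.ideal_span_singleton_smul] at hx
  obtain ⟨μ, hμ⟩ := (Submodule.mem_iSup_finset_iff_exists_sum _ _).mp hx
  choose g hg using fun k => (Submodule.mem_smul_pointwise_iff_exists _ _ _).mp (μ k).2
  exact ⟨g, fun k => (hg k).1, by simp only [(hg _).2, hμ]⟩

theorem pow_smul_mem_pow_smul_top {I : Ideal R} {t : R} (ht : t ∈ I) {k N : ℕ} (hk : k ≤ N)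
    {y : M} (hy : y ∈ I ^ (N - k) • (⊤ : Submodule R M)) :
    t ^ k • y ∈ I ^ N • (⊤ : Submodule R M) := by
  have := Submodule.smul_mem_smul (Ideal.pow_mem_pow ht k) hy
  rwa [← Submodule.mul_smul, ← pow_add, Nat.add_sub_cancel' hk] at this

theorem Finset.sum_range_sum_range_succ_comm {β : Type*} [AddCommMonoid β] (F : ℕ → ℕ → β)
    (N : ℕ) : ∑ n ∈ range N, ∑ k ∈ range (n + 1), F n k =
      ∑ k ∈ range N, ∑ i ∈ range (N - k), F (k + i) k := by
  rw [sum_comm' (t' := range N) (s' := fun k => Ico k N) (by intro n k; simp only [mem_range, mem_Ico]; omega)]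
  exact sum_congr rfl fun k _ => sum_Ico_eq_sum_range _ _ _

instance IsPrecomplete.span_singleton_sup {t : R} {J : Ideal R}
    [IsPrecomplete (Ideal.span {t}) M] [IsPrecomplete J M] :
    IsPrecomplete (Ideal.span {t} ⊔ J) M := by
  rw [isPrecomplete_iff_exists_sum]
  intro f hf
  choose g hgJ hfg using fun n => exists_sum_pow_smul_of_mem_span_singleton_sup_pow_smul_top (hf n)
  have hcol (k : ℕ) :
      ∃ h, ∀ N, ∑ i ∈ range N, g (k + i) k ≡ h [SMOD J ^ N • (⊤ : Submodule R M)] :=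
    isPrecomplete_iff_exists_sum.mp ‹_› (fun i => g (k + i) k) fun i => by
      simpa using hgJ (k + i) k
  choose h hh using hcol
  obtain ⟨L, hL⟩ := isPrecomplete_iff_exists_sum.mp ‹IsPrecomplete (Ideal.span {t}) M›
    (fun k => t ^ k • h k) fun k => by
      rw [Ideal.span_singleton_pow, Submodule.ideal_span_singleton_smul]
      exact Submodule.smul_mem_pointwise_smul _ _ _ Submodule.mem_top
  refine ⟨L, fun N => ?_⟩
  calc ∑ n ∈ range N, f n = ∑ k ∈ range N, t ^ k • ∑ i ∈ range (N - k), g (k + i) k := by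
        simp_rw [hfg, Finset.sum_range_sum_range_succ_comm, smul_sum]
    _ ≡ ∑ k ∈ range N, t ^ k • h k [SMOD (Ideal.span {t} ⊔ J) ^ N • (⊤ : Submodule R M)] := by
        refine SModEq.sum fun k hk => ?_
        rw [SModEq.sub_mem, ← smul_sub]
        refine pow_smul_mem_pow_smul_top (Ideal.mem_sup_left (Ideal.mem_span_singleton_self t))
          (mem_range.mp hk).le ?_
        exact Submodule.smul_mono_left (Ideal.pow_right_mono le_sup_right _)
          (SModEq.sub_mem.mp (hh k (N - k)))
    _ ≡ L [SMOD (Ideal.span {t} ⊔ J) ^ N • (⊤ : Submodule R M)] :=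
        (hL N).mono (Submodule.smul_mono_left (Ideal.pow_right_mono le_sup_left N))

theorem isPrecomplete_span_of_finite {S : Set R} (hS : S.Finite)
    (h : ∀ t ∈ S, IsPrecomplete (Ideal.span {t}) M) : IsPrecomplete (Ideal.span S) M := by
  induction S, hS using Set.Finite.induction_on with
  | empty => simpa using IsPrecomplete.bot (R := R) (M := M)
  | @insert t S _ _ ih =>
    have := h t (Set.mem_insert t S)
    have := ih fun u hu => h u (Set.mem_insert_of_mem t hu)
    rw [Ideal.span_insert]
    infer_instance

end AdicSeries

end

open CategoryTheory Opposite

/-- Let `R` be a commutative ring and `I ⊆ R` the ideal generated by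
`s₁, …, s_m`. If an `R`-module `C` satisfies `Ext¹_R(R[s_j⁻¹], C) = 0` for each `j`, then
`C` is `I`-adically complete: the canonical map `C → lim_n C/IⁿC` is surjective. -/
theorem contraadjusted_for_generators_implies_adically_complete
    (R : Type) [CommRing R] (m : ℕ) (s : Fin m → R) (I : Ideal R)
    (hI : I = Ideal.span (Set.range s))
    (C : Type) [AddCommGroup C] [Module R C]
    (h : ∀ j : Fin m, Subsingleton (((Ext R (ModuleCat R) 1).obj
      (op (ModuleCat.of R (Localization.Away (s j))))).obj (ModuleCat.of R C))) :
    Function.Surjective (AdicCompletion.of I C) := by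
  subst hI
  rw [AdicCompletion.of_surjective_iff]
  refine isPrecomplete_span_of_finite (Set.finite_range s) ?_
  rintro _ ⟨j, rfl⟩
  exact isPrecomplete_span_singleton_of_surjective_sub_smul_succ
    (surjective_sub_smul_succ_of_subsingleton_ext_away (s j) (h j))
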